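/- arXiv:1105.0261 — 5 statements merged into one kernel-verified Lean document; each statement's English description precedes it below -/
import Mathlib

section
/- Cone-covering lemma (Lemma 7 of the paper). For every n ≥ 1 there exist a natural number N and a constant λ ∈ (0,1), both depending only on n, with the following property: for every open set E ⊆ ℝⁿ of finite Lebesgue measure and every x ∈ E there exist points x₁, …, x_N in the topological boundary ∂E such that Γ(x) \ (E*_λ)^ ⊆ ⋃_{m=1}^N Γ(x_m), where (E*_λ)^ denotes the tent over the extension E*_λ. -/
open MeasureTheory ENNReal Metric Set

noncomputable section

/-- The cone `Γ(x) = {(y,t) : ‖x - y‖ < t}` in the upper half-space. -/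
def cone (n : ℕ) (x : EuclideanSpace ℝ (Fin n)) : Set (EuclideanSpace ℝ (Fin n) × ℝ) :=
  {p | dist x p.1 < p.2}

/-- The tent `Ê = {(y,t) : t > 0, B(y,t) ⊆ E}` over a set `E ⊆ ℝⁿ`. -/
def tent (n : ℕ) (E : Set (EuclideanSpace ℝ (Fin n))) : Set (EuclideanSpace ℝ (Fin n) × ℝ) :=
  {p | 0 < p.2 ∧ Metric.ball p.1 p.2 ⊆ E}

/-- The extension `E*_λ = {z : ∃ open ball B' ∋ z with |E ∩ B'| > λ |B'|}`,
i.e. the set where the Hardy–Littlewood maximal function of `1_E` exceeds `λ`. -/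
def ext (n : ℕ) (lam : ℝ) (E : Set (EuclideanSpace ℝ (Fin n))) :
    Set (EuclideanSpace ℝ (Fin n)) :=
  {z | ∃ (c : EuclideanSpace ℝ (Fin n)) (r : ℝ), z ∈ Metric.ball c r ∧
    ENNReal.ofReal lam * volume (Metric.ball c r) < volume (E ∩ Metric.ball c r)}

/-!
Fix a finite `1/8`-net `w₁, …, w_N` of the unit sphere and let `xᵢ` be a point of `∂E` nearest
to `x` in the closed cone `{q : (5/8) ‖q - x‖ ≤ ⟪q - x, wᵢ⟫}`; such points exist because `E`,
having finite measure, contains no large balls. If `(y, t) ∈ Γ(x)` is not in the tent over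
`E*_λ`, with `λ = 1024⁻ⁿ`, some `z ∈ B(y, t)` sees `E` with density at most `λ` in every ball, so
`E` contains no ball of radius `t/128` inside `B(z, 4t)`. Hence in every direction `u` the segment
from `x` to a point of `B(x + (t/16) u, t/128) \ E` meets `∂E` within distance `9t/128` of `x`,
inside a narrow cone around `u`. For `u` the direction of `y - x` and `wᵢ` close to `u`, the
nearest point `xᵢ` is at least as close to `x` and makes an angle of at most `π/3` with `u`,
which forces `‖xᵢ - y‖ < t`.
-/

open Filter Topology
open scoped RealInnerProductSpace

theorem IsPreconnected.inter_frontier_nonempty {α : Type*} [TopologicalSpace α] {s t : Set α}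
    (hs : IsPreconnected s) (hst : (s ∩ t).Nonempty) (hst' : (s \ t).Nonempty) :
    (s ∩ frontier t).Nonempty := by
  by_contra h
  have hcover : s ⊆ interior t ∪ (closure t)ᶜ := fun p hp => by
    by_contra hp'
    simp only [mem_union, mem_compl_iff, not_or, not_not] at hp'
    exact h ⟨p, hp, hp'.2, hp'.1⟩
  obtain ⟨a, has, hat⟩ := hst
  obtain ⟨b, hbs, hbt⟩ := hst'
  obtain ⟨p, -, hpt, hpt'⟩ := hs _ _ isOpen_interior isClosed_closure.isOpen_compl hcover
    ⟨a, has, (hcover has).resolve_right (not_not.2 (subset_closure hat))⟩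
    ⟨b, hbs, (hcover hbs).resolve_left fun hb => hbt (interior_subset hb)⟩
  exact hpt' (subset_closure (interior_subset hpt))

theorem IsClosed.exists_forall_dist_le {α : Type*} [PseudoMetricSpace α] [ProperSpace α]
    {s : Set α} (hs : IsClosed s) (hne : s.Nonempty) (x : α) :
    ∃ y ∈ s, ∀ z ∈ s, dist y x ≤ dist z x := by
  obtain ⟨y, hy, hxy⟩ := hs.exists_infDist_eq_dist hne x
  exact ⟨y, hy, fun z hz => by simpa only [dist_comm _ x, ← hxy] using infDist_le_dist_of_mem hz⟩

theorem exists_fin_net_unit_vectors {V : Type*} [NormedAddCommGroup V] [NormedSpace ℝ V]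
    [ProperSpace V] {ε : ℝ} (hε : 0 < ε) :
    ∃ (N : ℕ) (ws : Fin N → V), (∀ i, ‖ws i‖ = 1) ∧ ∀ u : V, ‖u‖ = 1 → ∃ i, ‖u - ws i‖ ≤ ε := by
  obtain ⟨T, hT, hTfin, hcover⟩ := finite_cover_balls_of_compact (isCompact_sphere (0 : V) 1) hε
  obtain ⟨N, f, rfl⟩ := hTfin.fin_embedding
  refine ⟨N, f, fun i => by simpa using hT (mem_range_self i), fun u hu => ?_⟩
  obtain ⟨_, ⟨i, rfl⟩, hi⟩ := mem_iUnion₂.1 (hcover (by simpa using hu))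
  exact ⟨i, (mem_ball_iff_norm.1 hi).le⟩

theorem exists_norm_eq_one_and_eq_norm_smul {V : Type*} [NormedAddCommGroup V] [NormedSpace ℝ V]
    [Nontrivial V] (v : V) : ∃ u : V, ‖u‖ = 1 ∧ v = ‖v‖ • u := by
  rcases eq_or_ne v 0 with rfl | hv
  · obtain ⟨u, hu⟩ := exists_norm_eq V zero_le_one
    exact ⟨u, hu, by simp⟩
  · refine ⟨‖v‖⁻¹ • v, norm_smul_inv_norm hv, ?_⟩
    rw [smul_smul, mul_inv_cancel₀ (norm_ne_zero_iff.2 hv), one_smul]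

section AxialCone

variable {V : Type*} [NormedAddCommGroup V] [InnerProductSpace ℝ V]

def axialCone (x w : V) (c : ℝ) : Set V :=
  {q | c * ‖q - x‖ ≤ ⟪q - x, w⟫}

theorem isClosed_axialCone (x w : V) (c : ℝ) : IsClosed (axialCone x w c) :=
  isClosed_le (by fun_prop) (by fun_prop)

theorem starConvex_axialCone (x w : V) (c : ℝ) : StarConvex ℝ x (axialCone x w c) := by
  intro q hq a b _ hb hab
  obtain rfl : a = 1 - b := by linarith
  have hqx : (1 - b) • x + b • q - x = b • (q - x) := by module
  simp only [axialCone, mem_ofPred_eq, hqx, norm_smul, real_inner_smul_left, Real.norm_of_nonneg hb]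
  rw [mul_left_comm]
  exact mul_le_mul_of_nonneg_left hq hb

theorem axialCone_subset_axialCone {x w u : V} {c c' ε : ℝ} (hwu : ‖w - u‖ ≤ ε)
    (hc : c' + ε ≤ c) : axialCone x w c ⊆ axialCone x u c' := by
  intro q hq
  have hinner : ⟪q - x, w⟫ - ⟪q - x, u⟫ ≤ ‖q - x‖ * ‖w - u‖ := by
    rw [← inner_sub_right]
    exact real_inner_le_norm _ _
  have := mul_le_mul_of_nonneg_left hwu (norm_nonneg (q - x))
  have := norm_nonneg (q - x)
  simp only [axialCone, mem_ofPred_eq] at hq ⊢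
  nlinarith

theorem ball_add_smul_subset_axialCone {x w : V} {a r c : ℝ} (hw : ‖w‖ = 1) (ha : 0 ≤ a)
    (hc : 0 ≤ c) (h : c * (a + r) ≤ a - r) : ball (x + a • w) r ⊆ axialCone x w c := by
  intro p hp
  rw [mem_ball, dist_eq_norm] at hp
  set e := p - (x + a • w)
  have hpx : p - x = a • w + e := by simp only [e]; abel
  have hnorm : ‖p - x‖ ≤ a + r := by
    rw [hpx]
    refine (norm_add_le _ _).trans ?_
    rw [norm_smul, hw, Real.norm_of_nonneg ha]
    linarith
  have hinner : a - r ≤ ⟪p - x, w⟫ := by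
    rw [hpx, inner_add_left, real_inner_smul_left, real_inner_self_eq_norm_sq, hw]
    have := abs_le.1 ((abs_real_inner_le_norm e w).trans_eq (by rw [hw, mul_one]))
    linarith
  calc c * ‖p - x‖ ≤ c * (a + r) := mul_le_mul_of_nonneg_left hnorm hc
    _ ≤ ⟪p - x, w⟫ := h.trans hinner

theorem exists_mem_frontier_axialCone_of_not_ball_subset {E : Set V} {x w : V} {r : ℝ}
    (hx : x ∈ E) (hw : ‖w‖ = 1) (hr : 0 ≤ r) (hE : ¬ ball (x + (8 * r) • w) r ⊆ E) :
    ∃ q ∈ frontier E ∩ axialCone x w (3 / 4), dist q x ≤ 9 * r := by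
  obtain ⟨v, hv, hvE⟩ := not_subset.1 hE
  obtain ⟨q, hq, hqE⟩ := (convex_segment x v).isPreconnected.inter_frontier_nonempty
    ⟨x, left_mem_segment ℝ x v, hx⟩ ⟨v, right_mem_segment ℝ x v, hvE⟩
  have hv_cone : v ∈ axialCone x w (3 / 4) :=
    ball_add_smul_subset_axialCone hw (by positivity) (by norm_num) (by linarith) hv
  have hv_ball : v ∈ closedBall x (9 * r) := by
    refine ball_subset_closedBall (ball_subset_ball' ?_ hv)
    rw [dist_self_add_left, norm_smul, hw, Real.norm_of_nonneg (by positivity)]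
    linarith
  exact ⟨q, ⟨hqE, (starConvex_axialCone x w _).segment_subset hv_cone hq⟩,
    (convex_closedBall x _).segment_subset (mem_closedBall_self (by positivity)) hv_ball hq⟩

theorem dist_lt_of_mem_axialCone {x y q u : V} {s t : ℝ} (hu : ‖u‖ = 1)
    (hq : q ∈ axialCone x u (1 / 2)) (hqx : dist q x < t) (hs : 0 ≤ s) (hst : s < t)
    (hy : y - x = s • u) : dist q y < t := by
  have hexpand : ‖q - y‖ ^ 2 = ‖q - x‖ ^ 2 - 2 * (s * ⟪q - x, u⟫) + s ^ 2 := by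
    rw [show q - y = (q - x) - s • u by rw [← hy]; abel, norm_sub_sq_real,
      real_inner_smul_right, norm_smul, hu, Real.norm_of_nonneg hs]
    ring
  have hq' : ‖q - x‖ / 2 ≤ ⟪q - x, u⟫ := by simpa [axialCone, div_eq_inv_mul] using hq
  rw [dist_eq_norm] at hqx ⊢
  have hinner := mul_le_mul_of_nonneg_left hq' hs
  refine lt_of_pow_lt_pow_left₀ 2 (hs.trans hst.le) ?_
  rcases le_total ‖q - x‖ s with h | h <;> nlinarith [norm_nonneg (q - x)]

end AxialCone

section AddHaar

variable {V : Type*} [NormedAddCommGroup V] [NormedSpace ℝ V] [FiniteDimensional ℝ V]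
  [Nontrivial V] [MeasurableSpace V] [BorelSpace V] (μ : Measure V) [μ.IsAddHaarMeasure]

theorem le_mul_of_addHaar_ball_le {c₁ c₂ : V} {ρ R a : ℝ} (hρ : 0 ≤ ρ) (hR : 0 ≤ R) (ha : 0 ≤ a)
    (h : μ (ball c₁ ρ) ≤ ENNReal.ofReal (a ^ Module.finrank ℝ V) * μ (ball c₂ R)) :
    ρ ≤ a * R := by
  rw [Measure.addHaar_ball μ c₁ hρ, Measure.addHaar_ball μ c₂ hR, ← mul_assoc,
    ← ENNReal.ofReal_mul (by positivity), ← mul_pow,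
    ENNReal.mul_le_mul_iff_left (measure_ball_pos μ 0 one_pos).ne' measure_ball_lt_top.ne,
    ENNReal.ofReal_le_ofReal_iff (by positivity)] at h
  exact le_of_pow_le_pow_left₀ Module.finrank_pos.ne' (by positivity) h

theorem exists_pos_forall_not_ball_subset {s : Set V} (hs : μ s ≠ ∞) :
    ∃ r > 0, ∀ c : V, ¬ ball c r ⊆ s := by
  have hω : μ (ball (0 : V) 1) ≠ 0 := (measure_ball_pos μ 0 one_pos).ne'
  have hlim : Tendsto (fun r : ℝ => ENNReal.ofReal (r ^ Module.finrank ℝ V) * μ (ball (0 : V) 1))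
      atTop (𝓝 ∞) := by
    have := ENNReal.Tendsto.mul_const (b := μ (ball (0 : V) 1)) (ENNReal.tendsto_ofReal_atTop.comp
      (tendsto_pow_atTop (Module.finrank_pos (R := ℝ) (M := V)).ne')) (.inl ENNReal.top_ne_zero)
    rwa [ENNReal.top_mul hω] at this
  obtain ⟨r, hr, hr0⟩ :=
    ((hlim.eventually (lt_mem_nhds hs.lt_top)).and (eventually_gt_atTop 0)).exists
  refine ⟨r, hr0, fun c hc => (measure_mono (μ := μ) hc).not_gt ?_⟩
  rwa [Measure.addHaar_ball μ c hr0.le]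

end AddHaar

theorem le_mul_of_ball_subset_of_notMem_ext {n : ℕ} [Nontrivial (EuclideanSpace ℝ (Fin n))]
    {E : Set (EuclideanSpace ℝ (Fin n))} {z c : EuclideanSpace ℝ (Fin n)} {ρ R a : ℝ}
    (ha : 0 ≤ a) (hz : z ∉ ext n (a ^ n) E) (hR : 0 < R) (hcE : ball c ρ ⊆ E)
    (hcz : ball c ρ ⊆ ball z R) : ρ ≤ a * R := by
  rcases lt_or_ge ρ 0 with hρ | hρ
  · exact hρ.le.trans (by positivity)
  have hsparse : volume (E ∩ ball z R) ≤ ENNReal.ofReal (a ^ n) * volume (ball z R) :=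
    not_lt.1 fun h => hz ⟨z, R, mem_ball_self hR, h⟩
  refine le_mul_of_addHaar_ball_le (c₁ := c) (c₂ := z) volume hρ hR.le ha ?_
  rw [finrank_euclideanSpace_fin]
  exact (measure_mono (subset_inter hcE hcz)).trans hsparse

theorem exists_mem_frontier_axialCone_of_notMem_ext {n : ℕ}
    [Nontrivial (EuclideanSpace ℝ (Fin n))] {E : Set (EuclideanSpace ℝ (Fin n))}
    {x z u : EuclideanSpace ℝ (Fin n)} {t : ℝ} (hx : x ∈ E) (hu : ‖u‖ = 1)
    (hxz : dist x z < 2 * t) (hz : z ∉ ext n ((1 / 1024) ^ n) E) :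
    ∃ q ∈ frontier E ∩ axialCone x u (3 / 4), dist q x ≤ 9 * (t / 128) := by
  have ht : 0 < t := by linarith [dist_nonneg (x := x) (y := z)]
  refine exists_mem_frontier_axialCone_of_not_ball_subset hx hu (by positivity) fun hE => ?_
  have hcz : ball (x + (8 * (t / 128)) • u) (t / 128) ⊆ ball z (4 * t) := by
    refine ball_subset_ball' ?_
    have := dist_triangle (x + (8 * (t / 128)) • u) x z
    rw [dist_self_add_left, norm_smul, hu, Real.norm_of_nonneg (by positivity)] at this
    linarith
  have := le_mul_of_ball_subset_of_notMem_ext (by norm_num) hz (by positivity) hE hcz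
  linarith

/-- Cone-covering lemma: there exist `N ∈ ℕ` and `λ ∈ (0,1)`, depending only on `n`, such
that for every open set `E ⊆ ℝⁿ` of finite measure and every `x ∈ E` there are points
`x₁, …, x_N ∈ ∂E` with `Γ(x) \ (E*_λ)^ ⊆ ⋃ₘ Γ(xₘ)`. -/
theorem cone_covering (n : ℕ) (hn : 1 ≤ n) :
    ∃ (N : ℕ) (lam : ℝ), 0 < lam ∧ lam < 1 ∧
      ∀ E : Set (EuclideanSpace ℝ (Fin n)), IsOpen E → volume E < ⊤ →
        ∀ x ∈ E, ∃ xs : Fin N → EuclideanSpace ℝ (Fin n),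
          (∀ m, xs m ∈ frontier E) ∧
          cone n x \ tent n (ext n lam E) ⊆ ⋃ m, cone n (xs m) := by
  have : NeZero n := ⟨by omega⟩
  obtain ⟨N, ws, hws, hws_net⟩ :=
    exists_fin_net_unit_vectors (V := EuclideanSpace ℝ (Fin n)) (ε := 1 / 8) (by norm_num)
  refine ⟨N, (1 / 1024) ^ n, by positivity, pow_lt_one₀ (by norm_num) (by norm_num) (by omega), ?_⟩
  intro E _ hE x hx
  obtain ⟨r, hr, hr_big⟩ := exists_pos_forall_not_ball_subset volume hE.ne
  have hnearest : ∀ i, ∃ q ∈ frontier E ∩ axialCone x (ws i) (5 / 8),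
      ∀ q' ∈ frontier E ∩ axialCone x (ws i) (5 / 8), dist q x ≤ dist q' x := fun i => by
    obtain ⟨q, ⟨hqE, hq⟩, -⟩ :=
      exists_mem_frontier_axialCone_of_not_ball_subset hx (hws i) hr.le (hr_big _)
    refine (isClosed_frontier.inter (isClosed_axialCone _ _ _)).exists_forall_dist_le ⟨q, hqE, ?_⟩ x
    exact axialCone_subset_axialCone (ε := 0) (by simp) (by norm_num) hq
  choose xs hxs hxs_min using hnearest
  refine ⟨xs, fun i => (hxs i).1, ?_⟩
  rintro ⟨y, t⟩ ⟨hxy, hnt⟩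
  change dist x y < t at hxy
  obtain ⟨z, hzy, hz⟩ : ∃ z ∈ ball y t, z ∉ ext n ((1 / 1024) ^ n) E :=
    not_subset.1 fun h => hnt ⟨dist_nonneg.trans_lt hxy, h⟩
  obtain ⟨u, hu, hyx⟩ := exists_norm_eq_one_and_eq_norm_smul (y - x)
  obtain ⟨i, hi⟩ := hws_net u hu
  obtain ⟨q, ⟨hqE, hq⟩, hqx⟩ := exists_mem_frontier_axialCone_of_notMem_ext (t := t) hx hu
    (by linarith [dist_triangle x y z, mem_ball'.1 hzy]) hz
  have hxs_q := hxs_min i q ⟨hqE, axialCone_subset_axialCone hi (by norm_num) hq⟩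
  refine mem_iUnion.2 ⟨i, ?_⟩
  show dist (xs i) y < t
  refine dist_lt_of_mem_axialCone hu ?_ (by linarith [dist_nonneg (x := x) (y := y)])
    (norm_nonneg _) (by rwa [← dist_eq_norm, dist_comm]) hyx
  exact axialCone_subset_axialCone (ε := 1 / 8) (by rwa [norm_sub_rev]) (by norm_num) (hxs i).2
end
end

section
/- Tent-covering lemma (Lemma 5 of the paper). Suppose E ⊆ ℝⁿ is open and has finite Lebesgue measure. Then there exists a countable family of pairwise disjoint open balls B^j ⊆ E such that Ê ⊆ ⋃_{j≥1} (5B^j)^, where 5B^j denotes the ball with the same center as B^j and five times its radius, and (5B^j)^ is the tent over 5B^j. -/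
open MeasureTheory ENNReal Metric Set Function

noncomputable section

/-- Tent-covering lemma: if `E ⊆ ℝⁿ` is open of finite measure, there is a countable family
of pairwise disjoint open balls `Bʲ ⊆ E` with `Ê ⊆ ⋃ⱼ (5Bʲ)^`. -/
theorem tent_covering (n : ℕ) (E : Set (EuclideanSpace ℝ (Fin n)))
    (hE : IsOpen E) (hfin : volume E < ⊤) :
    ∃ (c : ℕ → EuclideanSpace ℝ (Fin n)) (r : ℕ → ℝ),
      (∀ j, Metric.ball (c j) (r j) ⊆ E) ∧
      Pairwise (Disjoint on fun j => Metric.ball (c j) (r j)) ∧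
      tent n E ⊆ ⋃ j, tent n (Metric.ball (c j) (5 * r j)) := by
  classical
  rcases Nat.eq_zero_or_pos n with rfl | hn
  · -- dimension 0 : the space is a subsingleton
    by_cases hEe : E = ∅
    · refine ⟨fun _ => 0, fun _ => 0, by simp, ?_, ?_⟩
      · intro i j _; simp [Function.onFun]
      · intro p hp
        exfalso
        have : p.1 ∈ E := hp.2 (mem_ball_self hp.1)
        simp [hEe] at this
    · obtain ⟨y₀, hy₀⟩ := nonempty_iff_ne_empty.2 hEe
      have hsub : Subsingleton (EuclideanSpace ℝ (Fin 0)) := by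
        constructor; intro a b; ext i; exact absurd i.2 (Nat.not_lt_zero _)
      have hEuniv : E = univ := by
        ext z; simp only [mem_univ, iff_true]
        have := hsub.allEq z y₀; rw [this]; exact hy₀
      refine ⟨fun _ => y₀, fun j => if j = 0 then 1 else 0, ?_, ?_, ?_⟩
      · intro j; rw [hEuniv]; exact subset_univ _
      · intro i j hij
        simp only [Function.onFun]
        rcases eq_or_ne i 0 with rfl | hi
        · simp [hij.symm]
        · simp [hi]
      · intro p hp
        refine mem_iUnion.2 ⟨0, hp.1, ?_⟩
        intro z _
        have : z = y₀ := hsub.allEq z y₀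
        simp [this, mem_ball_self]
  · -- dimension ≥ 1
    have hnt : Nontrivial (EuclideanSpace ℝ (Fin n)) := by
      haveI : Nonempty (Fin n) := ⟨⟨0, hn⟩⟩
      infer_instance
    -- bound on radii of balls included in E
    set C := volume (ball (0 : EuclideanSpace ℝ (Fin n)) 1) with hC
    have hC0 : C ≠ 0 := (measure_ball_pos volume _ one_pos).ne'
    have hCt : C ≠ ⊤ := measure_ball_lt_top.ne
    set R : ℝ := max 1 (volume E / C).toReal with hR
    have hbound : ∀ a ∈ tent n E, a.2 ≤ R := by
      rintro ⟨y, t⟩ ⟨ht, hb⟩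
      rcases le_or_gt t 1 with h1 | h1
      · exact h1.trans (le_max_left _ _)
      · have hvol : volume (ball y t) = ENNReal.ofReal (t ^ n) * C := by
          rw [Measure.addHaar_ball volume y (by positivity : (0:ℝ) ≤ t)]
          congr 2
          simp [finrank_euclideanSpace_fin]
        have hle : ENNReal.ofReal (t ^ n) * C ≤ volume E := by
          rw [← hvol]; exact measure_mono hb
        have hdiv : ENNReal.ofReal (t ^ n) ≤ volume E / C :=
          ENNReal.le_div_iff_mul_le (Or.inl hC0) (Or.inl hCt) |>.2 hle
        have hfin' : volume E / C ≠ ⊤ :=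
          (ENNReal.div_lt_top hfin.ne hC0).ne
        have htn : t ^ n ≤ (volume E / C).toReal := by
          have := ENNReal.toReal_mono hfin' hdiv
          rwa [ENNReal.toReal_ofReal (by positivity)] at this
        have : t ≤ t ^ n := le_self_pow₀ h1.le hn.ne'
        exact le_trans (this.trans htn) (le_max_right _ _)
    -- Vitali covering lemma with dilation factor 4
    obtain ⟨u, hut, hdisj, hcov⟩ :=
      Vitali.exists_disjoint_subfamily_covering_enlargement_closedBall (tent n E)
        Prod.fst Prod.snd R hbound 4 (by norm_num)
    -- u is countable
    have hcount : u.Countable := by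
      apply hdisj.countable_of_nonempty_interior
      intro a ha
      have hpos : 0 < a.2 := (hut ha).1
      exact ⟨a.1, mem_interior.2 ⟨ball a.1 a.2, ball_subset_closedBall, isOpen_ball,
        mem_ball_self hpos⟩⟩
    obtain ⟨f, hf⟩ := Set.countable_iff_exists_injective.mp hcount
    -- enumerate u along ℕ with a partial inverse of f
    refine ⟨fun k => if h : ∃ a : u, f a = k then h.choose.1.1 else 0,
            fun k => if h : ∃ a : u, f a = k then h.choose.1.2 else 0, ?_, ?_, ?_⟩
    · intro j
      by_cases h : ∃ a : u, f a = j
      · simp only [dif_pos h]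
        exact (hut h.choose.2).2
      · simp only [dif_neg h, ball_zero]
        exact empty_subset _
    · intro i j hij
      simp only [Function.onFun]
      by_cases hi : ∃ a : u, f a = i
      · by_cases hj : ∃ a : u, f a = j
        · simp only [dif_pos hi, dif_pos hj]
          have hne : hi.choose ≠ hj.choose := by
            intro heq
            apply hij
            rw [← hi.choose_spec, ← hj.choose_spec, heq]
          have hne' : (hi.choose : _).1 ≠ (hj.choose : _).1 :=
            fun h => hne (Subtype.coe_injective h)
          have := hdisj hi.choose.2 hj.choose.2 hne'
          exact this.mono ball_subset_closedBall ball_subset_closedBall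
        · simp only [dif_neg hj, ball_zero]
          exact disjoint_empty _
      · simp only [dif_neg hi, ball_zero]
        exact empty_disjoint _
    · intro p hp
      obtain ⟨b, hbu, hbsub⟩ := hcov p hp
      set k := f ⟨b, hbu⟩ with hk
      have hex : ∃ a : u, f a = k := ⟨⟨b, hbu⟩, rfl⟩
      have hchoose : hex.choose = ⟨b, hbu⟩ := hf hex.choose_spec
      refine mem_iUnion.2 ⟨k, hp.1, ?_⟩
      simp only [dif_pos hex, hchoose]
      have hb2 : 0 < b.2 := (hut hbu).1
      calc ball p.1 p.2 ⊆ closedBall p.1 p.2 := ball_subset_closedBall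
        _ ⊆ closedBall b.1 (4 * b.2) := hbsub
        _ ⊆ ball b.1 (5 * b.2) := closedBall_subset_ball (by linarith)
end
end

section
/- Sector lemma (Lemma 6 of the paper). Let c(n) ∈ (0,1) be the constant such that the Lebesgue measure of every sector R(x,t,w) equals c(n) times the measure of the ball B(x,t). Let 0 < λ < c(n), let E ⊆ ℝⁿ be measurable, and suppose that for some x ∈ ℝⁿ, t > 0 and unit vector w one has R(x,t,w) ⊆ E. Then for every y ∈ R(x,t,w) the ball B(y,t) is contained in E*_λ. -/
/-!
Any two vectors within `30°` of a common axis are within `60°` of each other (triangle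
inequality for angles), and two vectors of length `< t` at angle `≤ 60°` are at distance `< t`
(law of cosines). Hence the sector `R(x,t,w)` lies in `B(y,t)` for each of its points `y`, so
`|E ∩ B(y,t)| ≥ |R(x,t,w)| = c |B(y,t)| > λ |B(y,t)|` and `B(y,t)` is an admissible ball for
every point of `B(y,t)`.
-/

open MeasureTheory ENNReal Metric Set

noncomputable section

/-- The sector `R(x,t,w) = {x} ∪ {y ∈ B(x,t) : ⟨(y-x)/‖y-x‖, w⟩ ≥ √3/2}`. -/
def sector (n : ℕ) (x : EuclideanSpace ℝ (Fin n)) (t : ℝ) (w : EuclideanSpace ℝ (Fin n)) :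
    Set (EuclideanSpace ℝ (Fin n)) :=
  insert x {y ∈ Metric.ball x t | Real.sqrt 3 / 2 ≤ (inner ℝ (‖y - x‖⁻¹ • (y - x)) w : ℝ)}

open InnerProductGeometry Real
open scoped RealInnerProductSpace

section InnerProductSpace

variable {V : Type*} [NormedAddCommGroup V] [InnerProductSpace ℝ V]

theorem angle_le_pi_div_six_of_inner {p w : V} (hp0 : p ≠ 0) (hw : ‖w‖ = 1)
    (hp : √3 / 2 * ‖p‖ ≤ ⟪p, w⟫) : angle p w ≤ π / 6 := by
  have hcos : √3 / 2 ≤ ⟪p, w⟫ / (‖p‖ * ‖w‖) := by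
    rwa [hw, mul_one, le_div_iff₀ (norm_pos_iff.mpr hp0)]
  calc angle p w = arccos (⟪p, w⟫ / (‖p‖ * ‖w‖)) := rfl
    _ ≤ arccos (cos (π / 6)) := arccos_le_arccos (cos_pi_div_six ▸ hcos)
    _ = π / 6 := arccos_cos (by positivity) (by linarith [pi_pos])

theorem norm_mul_norm_div_two_le_inner_of_inner {p q w : V} (hw : ‖w‖ = 1)
    (hp : √3 / 2 * ‖p‖ ≤ ⟪p, w⟫) (hq : √3 / 2 * ‖q‖ ≤ ⟪q, w⟫) :
    ‖p‖ * ‖q‖ / 2 ≤ ⟪p, q⟫ := by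
  rcases eq_or_ne p 0 with rfl | hp0
  · simp
  rcases eq_or_ne q 0 with rfl | hq0
  · simp
  have hangle : angle p q ≤ π / 3 := by
    have hpw := angle_le_pi_div_six_of_inner hp0 hw hp
    have hqw := angle_le_pi_div_six_of_inner hq0 hw hq
    linarith [angle_le_angle_add_angle p w q, angle_comm w q]
  have hcos : 1 / 2 ≤ cos (angle p q) :=
    cos_pi_div_three ▸ cos_le_cos_of_nonneg_of_le_pi (angle_nonneg p q) (by linarith [pi_pos])
      hangle
  rw [← cos_angle_mul_norm_mul_norm]
  nlinarith [mul_nonneg (norm_nonneg p) (norm_nonneg q)]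

theorem norm_sub_lt_of_norm_mul_norm_div_two_le_inner {u v : V} {t : ℝ} (hu : ‖u‖ < t)
    (hv : ‖v‖ < t) (huv : ‖u‖ * ‖v‖ / 2 ≤ ⟪u, v⟫) : ‖u - v‖ < t := by
  have hsq : ‖u - v‖ ^ 2 = ‖u‖ ^ 2 - 2 * ⟪u, v⟫ + ‖v‖ ^ 2 := norm_sub_sq_real u v
  refine lt_of_pow_lt_pow_left₀ 2 (by linarith [norm_nonneg u]) ?_
  rcases le_total ‖u‖ ‖v‖ with h | h <;> nlinarith [norm_nonneg u, norm_nonneg v]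

end InnerProductSpace

section Sector

variable {n : ℕ} {x w p : EuclideanSpace ℝ (Fin n)} {t : ℝ}

theorem sector_subset_ball (ht : 0 < t) : sector n x t w ⊆ ball x t :=
  insert_subset (mem_ball_self ht) fun _ hp ↦ hp.1

theorem sqrt_three_div_two_mul_norm_le_inner_of_mem_sector (hp : p ∈ sector n x t w) :
    √3 / 2 * ‖p - x‖ ≤ ⟪p - x, w⟫ := by
  rcases hp with rfl | ⟨-, hpw⟩
  · simp
  rcases eq_or_ne ‖p - x‖ 0 with h0 | h0
  · simp [norm_eq_zero.mp h0]
  rw [real_inner_smul_left] at hpw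
  calc √3 / 2 * ‖p - x‖ ≤ ‖p - x‖⁻¹ * ⟪p - x, w⟫ * ‖p - x‖ := by gcongr
    _ = ⟪p - x, w⟫ := by field_simp

theorem sector_subset_ball_of_mem {y : EuclideanSpace ℝ (Fin n)} (ht : 0 < t) (hw : ‖w‖ = 1)
    (hy : y ∈ sector n x t w) : sector n x t w ⊆ ball y t := by
  intro p hp
  rw [mem_ball, dist_eq_norm, ← sub_sub_sub_cancel_right p y x]
  refine norm_sub_lt_of_norm_mul_norm_div_two_le_inner ?_ ?_ ?_
  · exact mem_ball_iff_norm.mp (sector_subset_ball ht hp)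
  · exact mem_ball_iff_norm.mp (sector_subset_ball ht hy)
  · exact norm_mul_norm_div_two_le_inner_of_inner hw
      (sqrt_three_div_two_mul_norm_le_inner_of_mem_sector hp)
      (sqrt_three_div_two_mul_norm_le_inner_of_mem_sector hy)

end Sector

theorem sector_lemma_general (n : ℕ) (c : ℝ) (hc0 : 0 < c)
    (hcn : ∀ (x w : EuclideanSpace ℝ (Fin n)) (t : ℝ), 0 < t → ‖w‖ = 1 →
      volume (sector n x t w) = ENNReal.ofReal c * volume (Metric.ball x t))
    (lam : ℝ) (hlamc : lam < c)
    (E : Set (EuclideanSpace ℝ (Fin n)))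
    (x w : EuclideanSpace ℝ (Fin n)) (t : ℝ) (ht : 0 < t) (hw : ‖w‖ = 1)
    (hsub : sector n x t w ⊆ E) :
    ∀ y ∈ sector n x t w, Metric.ball y t ⊆ ext n lam E := by
  intro y hy z hz
  refine ⟨y, t, hz, ?_⟩
  have hball : volume (ball y t) = volume (ball x t) := by
    rw [Measure.addHaar_ball_center volume y, Measure.addHaar_ball_center volume x]
  calc ENNReal.ofReal lam * volume (ball y t)
      < ENNReal.ofReal c * volume (ball x t) := by
        rw [hball]
        exact ENNReal.mul_lt_mul_left (measure_ball_pos volume x ht).ne' measure_ball_lt_top.ne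
          ((ENNReal.ofReal_lt_ofReal_iff hc0).mpr hlamc)
    _ = volume (sector n x t w) := (hcn x w t ht hw).symm
    _ ≤ volume (E ∩ ball y t) :=
        measure_mono (subset_inter hsub (sector_subset_ball_of_mem ht hw hy))

/-- Sector lemma: with `c(n) ∈ (0,1)` the constant with `|R(x,t,w)| = c(n)|B(x,t)|`, if
`0 < λ < c(n)`, `E` is measurable and `R(x,t,w) ⊆ E`, then `B(y,t) ⊆ E*_λ` for every
`y ∈ R(x,t,w)`. -/
theorem sector_lemma (n : ℕ) (c : ℝ) (hc0 : 0 < c) (hc1 : c < 1)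
    (hcn : ∀ (x w : EuclideanSpace ℝ (Fin n)) (t : ℝ), 0 < t → ‖w‖ = 1 →
      volume (sector n x t w) = ENNReal.ofReal c * volume (Metric.ball x t))
    (lam : ℝ) (hlam0 : 0 < lam) (hlamc : lam < c)
    (E : Set (EuclideanSpace ℝ (Fin n))) (hE : MeasurableSet E)
    (x w : EuclideanSpace ℝ (Fin n)) (t : ℝ) (ht : 0 < t) (hw : ‖w‖ = 1)
    (hsub : sector n x t w ⊆ E) :
    ∀ y ∈ sector n x t w, Metric.ball y t ⊆ ext n lam E :=
  sector_lemma_general n c hc0 hcn lam hlamc E x w t ht hw hsub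
end
end

section
/- Diameter bound for sectors. For every x ∈ ℝⁿ, every t > 0 and every unit vector w ∈ ℝⁿ, any two points y, y' ∈ R(x,t,w) satisfy ‖y − y'‖ ≤ t; that is, the sector R(x,t,w) has diameter at most t. -/
open MeasureTheory Metric Set

noncomputable section

/-! Measured from `x`, every point of the sector other than `x` makes an angle of at most `π/6`
with `w`, so by the triangle inequality for angles two such points `y, y'` subtend an angle of at
most `π/3` at `x`. The law of cosines then gives
`‖y - y'‖² ≤ ‖y - x‖² + ‖y' - x‖² - ‖y - x‖ ‖y' - x‖ ≤ max (‖y - x‖, ‖y' - x‖)² < t²`. -/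

open InnerProductGeometry Real RealInnerProductSpace

section InnerProductSpace

variable {V : Type*} [NormedAddCommGroup V] [InnerProductSpace ℝ V]

theorem angle_le_pi_div_six_of_sqrt_three_div_two_le_inner {u w : V} (hw : ‖w‖ = 1)
    (h : √3 / 2 ≤ ⟪‖u‖⁻¹ • u, w⟫) : angle u w ≤ π / 6 := by
  rw [real_inner_smul_left, inv_mul_eq_div] at h
  calc angle u w = arccos (⟪u, w⟫ / ‖u‖) := by rw [angle, hw, mul_one]
    _ ≤ arccos (cos (π / 6)) := arccos_le_arccos (by rwa [cos_pi_div_six])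
    _ = π / 6 := arccos_cos (by positivity) (by linarith [pi_pos])

theorem norm_sub_lt_of_angle_le_pi_div_three {a b : V} {t : ℝ} (ha : ‖a‖ < t) (hb : ‖b‖ < t)
    (hab : angle a b ≤ π / 3) : ‖a - b‖ < t := by
  have hcos : 1 / 2 ≤ cos (angle a b) := by
    rw [← cos_pi_div_three]
    exact cos_le_cos_of_nonneg_of_le_pi (angle_nonneg a b) (by linarith [pi_pos]) hab
  have hsq : ‖a - b‖ * ‖a - b‖ < t * t := by
    rw [norm_sub_sq_eq_norm_sq_add_norm_sq_sub_two_mul_norm_mul_norm_mul_cos_angle]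
    nlinarith [norm_nonneg a, norm_nonneg b, mul_nonneg (norm_nonneg a) (norm_nonneg b)]
  exact lt_of_mul_self_lt_mul_self₀ ((norm_nonneg b).trans hb.le) hsq

end InnerProductSpace

theorem norm_sub_lt_and_angle_le_of_mem_sector {n : ℕ} {x w y : EuclideanSpace ℝ (Fin n)} {t : ℝ}
    (hw : ‖w‖ = 1) (hy : y ∈ sector n x t w) (hyx : y ≠ x) :
    ‖y - x‖ < t ∧ angle (y - x) w ≤ π / 6 := by
  obtain ⟨hball, hinner⟩ := (mem_insert_iff.mp hy).resolve_left hyx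
  exact ⟨mem_ball_iff_norm.mp hball,
    angle_le_pi_div_six_of_sqrt_three_div_two_le_inner hw hinner⟩

/-- Diameter bound for sectors: any two points of `R(x,t,w)` are at distance at most `t`. -/
theorem sector_diameter (n : ℕ) (x w : EuclideanSpace ℝ (Fin n)) (t : ℝ)
    (ht : 0 < t) (hw : ‖w‖ = 1) :
    ∀ y ∈ sector n x t w, ∀ y' ∈ sector n x t w, ‖y - y'‖ ≤ t := by
  intro y hy y' hy'
  rcases eq_or_ne y x with rfl | hyx
  · rcases eq_or_ne y' y with rfl | hy'y
    · simpa using ht.le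
    · rw [norm_sub_rev]
      exact (norm_sub_lt_and_angle_le_of_mem_sector hw hy' hy'y).1.le
  obtain ⟨hyt, hyw⟩ := norm_sub_lt_and_angle_le_of_mem_sector hw hy hyx
  rcases eq_or_ne y' x with rfl | hy'x
  · exact hyt.le
  obtain ⟨hy't, hy'w⟩ := norm_sub_lt_and_angle_le_of_mem_sector hw hy' hy'x
  have hangle : angle (y - x) (y' - x) ≤ π / 3 := by
    linarith [angle_le_angle_add_angle (y - x) w (y' - x), angle_comm w (y' - x)]
  simpa using (norm_sub_lt_of_angle_le_pi_div_three hyt hy't hangle).le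
end
end

section
/- Gradient bound for the projection kernel. Let α > 0 and let ψ : [0,∞) → ℝ be continuously differentiable with |ψ(s)| ≤ 1 and |ψ'(s)| ≤ L for all s, and ψ(s) = 0 for all s ≥ α. Then for all distinct x, z ∈ ℝⁿ, sup over (y,t) ∈ ℝⁿ × (0,∞) of | ψ'(‖x−y‖/t) · t^{−(n+1)} · ψ(‖z−y‖/t) | ≤ L (2α)^{n+1} / ‖x − z‖^{n+1}. -/
open Metric Set

/-- Gradient bound for the projection kernel: if `ψ` is continuously differentiable with
`|ψ| ≤ 1`, `|ψ'| ≤ L`, and `ψ = 0` on `[α,∞)`, then for distinct `x, z` and all `(y,t)`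
with `t > 0`, `|ψ'(‖x-y‖/t) t^{-(n+1)} ψ(‖z-y‖/t)| ≤ L (2α)^{n+1} / ‖x-z‖^{n+1}`. -/
theorem kernel_gradient_bound (n : ℕ) (α L : ℝ) (hα : 0 < α) (ψ : ℝ → ℝ)
    (hC1 : ContDiff ℝ 1 ψ) (hψ1 : ∀ s, |ψ s| ≤ 1) (hL : ∀ s, |deriv ψ s| ≤ L)
    (hψ0 : ∀ s, α ≤ s → ψ s = 0)
    (x z : EuclideanSpace ℝ (Fin n)) (hxz : x ≠ z) :
    ∀ (y : EuclideanSpace ℝ (Fin n)) (t : ℝ), 0 < t →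
      |deriv ψ (dist x y / t) * (t ^ (n + 1))⁻¹ * ψ (dist z y / t)| ≤
        L * (2 * α) ^ (n + 1) / dist x z ^ (n + 1) := by
  have hL0 : 0 ≤ L := le_trans (abs_nonneg _) (hL 0)
  have hd : 0 < dist x z := dist_pos.2 hxz
  have hRHS : 0 ≤ L * (2 * α) ^ (n + 1) / dist x z ^ (n + 1) := by positivity
  have key : ∀ s, α < s → deriv ψ s = 0 := by
    intro s hs
    have heq : ψ =ᶠ[nhds s] fun _ => (0 : ℝ) := by
      filter_upwards [Ioi_mem_nhds hs] with u hu
      exact hψ0 u (le_of_lt hu)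
    rw [heq.deriv_eq]; simp
  intro y t ht
  by_cases h1 : deriv ψ (dist x y / t) = 0
  · rw [h1]; simpa using hRHS
  by_cases h2 : ψ (dist z y / t) = 0
  · rw [h2]; simpa using hRHS
  have hxy : dist x y ≤ α * t := by
    by_contra h
    exact h1 (key _ ((lt_div_iff₀ ht).2 (by linarith [not_le.1 h])))
  have hzy : dist z y ≤ α * t := by
    by_contra h
    exact h2 (hψ0 _ ((le_div_iff₀ ht).2 (by linarith [not_le.1 h])))
  have hdt : dist x z ≤ 2 * α * t := by
    calc dist x z ≤ dist x y + dist y z := dist_triangle x y z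
    _ = dist x y + dist z y := by rw [dist_comm y z]
    _ ≤ 2 * α * t := by linarith
  have htinv : (t ^ (n + 1))⁻¹ ≤ (2 * α) ^ (n + 1) / dist x z ^ (n + 1) := by
    rw [inv_eq_one_div, div_le_div_iff₀ (by positivity) (by positivity), one_mul]
    calc dist x z ^ (n + 1) ≤ (2 * α * t) ^ (n + 1) :=
          pow_le_pow_left₀ hd.le hdt _
      _ = (2 * α) ^ (n + 1) * t ^ (n + 1) := by ring
  calc |deriv ψ (dist x y / t) * (t ^ (n + 1))⁻¹ * ψ (dist z y / t)|
      = |deriv ψ (dist x y / t)| * |(t ^ (n + 1))⁻¹| * |ψ (dist z y / t)| := by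
        rw [abs_mul, abs_mul]
    _ ≤ L * ((2 * α) ^ (n + 1) / dist x z ^ (n + 1)) * 1 := by
        apply mul_le_mul _ (hψ1 _) (abs_nonneg _) (by positivity)
        apply mul_le_mul (hL _) _ (abs_nonneg _) hL0
        rwa [abs_of_nonneg (by positivity)]
    _ = L * (2 * α) ^ (n + 1) / dist x z ^ (n + 1) := by ring
end
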